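/- arXiv:1411.4814 — 4 statements merged into one kernel-verified Lean document; each statement's English description precedes it below -/
import Mathlib

section
/- In the one-dimensional Hegselmann–Krause dynamics with agents N = {1,…,n} and update rule x_i(t+1) = (Σ_{j : |x_i(t) − x_j(t)| ≤ 1} x_j(t)) / |{j : |x_i(t) − x_j(t)| ≤ 1}|, if x_i(0) ≤ x_j(0) for two agents i, j, then x_i(t) ≤ x_j(t) for all t ∈ ℕ. -/
/-!
The update of an agent with opinion `a` is the average of the opinions lying in the window
`[a - 1, a + 1]`. The average of the values lying in a window `[l, r]` is monotone in each endpoint: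
moving `r` to the right only adds values above all those already counted, and moving `l` to the
right only discards values below all those kept. So `a ≤ b` gives
`avg [a - 1, a + 1] ≤ avg [a - 1, b + 1] ≤ avg [b - 1, b + 1]`.
-/

open Finset
open scoped BigOperators

section

variable {ι K : Type*} [Field K] [LinearOrder K] [IsStrictOrderedRing K]

lemma Finset.expect_le_expect_subset_of_sdiff_le [DecidableEq ι] {s u : Finset ι} {f : ι → K}
    {c : K} (hus : u ⊆ s) (hu : u.Nonempty) (hsdiff : ∀ k ∈ s \ u, f k ≤ c)
    (hle : ∀ k ∈ u, c ≤ f k) :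
    𝔼 k ∈ s, f k ≤ 𝔼 k ∈ u, f k := by
  set m := 𝔼 k ∈ u, f k
  have hcm : c ≤ m := le_expect hu hle
  have hsum_sdiff : ∑ k ∈ s \ u, f k ≤ #(s \ u) * m := by
    calc ∑ k ∈ s \ u, f k ≤ #(s \ u) • c := sum_le_card_nsmul _ _ _ hsdiff
      _ ≤ #(s \ u) * m := by rw [nsmul_eq_mul]; gcongr
  have hs : (0 : K) < #s := by exact_mod_cast (hu.mono hus).card_pos
  rw [expect_eq_sum_div_card, div_le_iff₀ hs, ← sum_sdiff hus, ← card_sdiff_add_card_eq_card hus,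
    ← card_mul_expect u f]
  push_cast
  linarith

lemma Finset.expect_subset_le_expect_of_le_sdiff [DecidableEq ι] {s u : Finset ι} {f : ι → K}
    {c : K} (hus : u ⊆ s) (hu : u.Nonempty) (hsdiff : ∀ k ∈ s \ u, c ≤ f k)
    (hle : ∀ k ∈ u, f k ≤ c) :
    𝔼 k ∈ u, f k ≤ 𝔼 k ∈ s, f k := by
  have := expect_le_expect_subset_of_sdiff_le (f := fun k => -f k) (c := -c) hus hu
    (fun k hk => neg_le_neg (hsdiff k hk)) (fun k hk => neg_le_neg (hle k hk))
  simpa only [expect_neg_distrib, neg_le_neg_iff] using this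

lemma Finset.expect_filter_mem_Icc_mono {s : Finset ι} {f : ι → K} {l l' r r' : K}
    (hl : l ≤ l') (hr : r ≤ r') (hne : ∃ k ∈ s, f k ∈ Set.Icc l r)
    (hne' : ∃ k ∈ s, f k ∈ Set.Icc l' r') :
    𝔼 k ∈ s with f k ∈ Set.Icc l r, f k ≤ 𝔼 k ∈ s with f k ∈ Set.Icc l' r', f k := by
  classical
  obtain ⟨k, hk, hkl, hkr⟩ := hne
  obtain ⟨k', hk', hkl', hkr'⟩ := hne'
  calc 𝔼 k ∈ s with f k ∈ Set.Icc l r, f k ≤ 𝔼 k ∈ s with f k ∈ Set.Icc l r', f k := by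
        refine expect_subset_le_expect_of_le_sdiff (c := r) ?_
          ⟨k, by simp [hk, hkl, hkr]⟩ ?_ ?_
        · exact monotone_filter_right _ fun _ _ h => ⟨h.1, h.2.trans hr⟩
        · intro k hk
          simp only [mem_sdiff, mem_filter, Set.mem_Icc] at hk
          grind
        · simp +contextual
    _ ≤ 𝔼 k ∈ s with f k ∈ Set.Icc l' r', f k := by
        refine expect_le_expect_subset_of_sdiff_le (c := l') ?_
          ⟨k', by simp [hk', hkl', hkr']⟩ ?_ ?_
        · exact monotone_filter_right _ fun _ _ h => ⟨hl.trans h.1, h.2⟩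
        · intro k hk
          simp only [mem_sdiff, mem_filter, Set.mem_Icc] at hk
          grind
        · simp +contextual

lemma Finset.sum_filter_abs_sub_le_div_card_eq_expect {s : Finset ι} (f : ι → K) (a r : K) :
    (∑ k ∈ s.filter (fun k => |a - f k| ≤ r), f k) / #(s.filter (fun k => |a - f k| ≤ r)) =
      𝔼 k ∈ s with f k ∈ Set.Icc (a - r) (a + r), f k := by
  simp_rw [Set.mem_Icc_iff_abs_le, expect_eq_sum_div_card]

end

/-- Order preservation in the 1-D Hegselmann–Krause dynamics. -/
theorem hk_order_preservation {n : ℕ} (x : Fin n → ℕ → ℝ)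
    (hupd : ∀ i t, x i (t + 1) =
      (∑ j ∈ univ.filter (fun j => |x i t - x j t| ≤ 1), x j t) /
        (univ.filter (fun j => |x i t - x j t| ≤ 1)).card)
    (i j : Fin n) (h0 : x i 0 ≤ x j 0) :
    ∀ t : ℕ, x i t ≤ x j t := by
  have hstep (k : Fin n) (t : ℕ) :
      x k (t + 1) = 𝔼 l with x l t ∈ Set.Icc (x k t - 1) (x k t + 1), x l t :=
    (hupd k t).trans (sum_filter_abs_sub_le_div_card_eq_expect _ _ _)
  have hself (k : Fin n) (t : ℕ) : ∃ l ∈ univ, x l t ∈ Set.Icc (x k t - 1) (x k t + 1) :=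
    ⟨k, mem_univ k, by simp⟩
  intro t
  induction t with
  | zero => exact h0
  | succ t ih =>
    rw [hstep i, hstep j]
    exact expect_filter_mem_Icc_mono (by linarith) (by linarith) (hself i t) (hself j t)
end

section
/- In the one-dimensional Hegselmann–Krause dynamics, for any two agents i and j and any time t, x_i(t+1) = x_j(t+1) if and only if the neighborhoods N_i(t) = {k : |x_i(t) − x_k(t)| ≤ 1} and N_j(t) = {k : |x_j(t) − x_k(t)| ≤ 1} coincide. -/
/-!
Write `avg N` for the mean opinion over `N`. If `y i ≤ y j`, an agent seen by `i` but not by `j`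
lies below everything `j` sees, and an agent seen by `j` but not by `i` lies above everything `i`
sees. Hence distinct neighborhoods `N_i ≠ N_j` give `avg N_i < avg N_j`, i.e. distinct updated
opinions.
-/

open Finset

theorem Finset.sum_product_sub {ι R : Type*} [CommRing R] (A B : Finset ι) (y : ι → R) :
    ∑ p ∈ A ×ˢ B, (y p.1 - y p.2) = #B * ∑ a ∈ A, y a - #A * ∑ b ∈ B, y b := by
  simp only [sum_product, sum_sub_distrib, sum_const, nsmul_eq_mul, ← mul_sum]

/-- In `∑ (a, b) ∈ A ×ˢ B, (y a - y b)` the pairs inside `A ∩ B` cancel, and every other pair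
contributes a negative amount. -/
theorem Finset.sum_div_card_lt_sum_div_card {ι K : Type*} [DecidableEq ι] [Field K]
    [LinearOrder K] [IsStrictOrderedRing K] {A B : Finset ι} (y : ι → K)
    (hA : A.Nonempty) (hB : B.Nonempty) (hAB : A ≠ B)
    (hlt : ∀ a ∈ A, ∀ b ∈ B, a ∉ B ∨ b ∉ A → y a < y b) :
    (∑ a ∈ A, y a) / #A < (∑ b ∈ B, y b) / #B := by
  have hCAB : (A ∩ B) ×ˢ (A ∩ B) ⊆ A ×ˢ B :=
    product_subset_product inter_subset_left inter_subset_right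
  have hcancel : ∑ p ∈ (A ∩ B) ×ˢ (A ∩ B), (y p.1 - y p.2) = 0 := by
    rw [sum_product_sub]; ring
  have hrest : (A ×ˢ B \ (A ∩ B) ×ˢ (A ∩ B)).Nonempty := by
    obtain ⟨a₀, ha₀⟩ := hA
    obtain ⟨b₀, hb₀⟩ := hB
    refine sdiff_nonempty.mpr fun h => hAB (Subset.antisymm (fun a ha => ?_) fun b hb => ?_)
    · exact (mem_inter.mp (mem_product.mp (h (mk_mem_product ha hb₀))).1).2
    · exact (mem_inter.mp (mem_product.mp (h (mk_mem_product ha₀ hb))).2).1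
  have hneg : ∑ p ∈ A ×ˢ B, (y p.1 - y p.2) < 0 := by
    rw [← sum_sdiff hCAB, hcancel, add_zero]
    refine sum_neg (fun p hp => ?_) ?_
    · obtain ⟨hpAB, hpC⟩ := mem_sdiff.mp hp
      obtain ⟨ha, hb⟩ := mem_product.mp hpAB
      refine sub_neg.mpr (hlt _ ha _ hb ?_)
      by_contra! h
      exact hpC (mem_product.mpr ⟨mem_inter.mpr ⟨ha, h.1⟩, mem_inter.mpr ⟨h.2, hb⟩⟩)
    · exact hrest
  rw [sum_product_sub] at hneg
  rw [div_lt_div_iff₀ (by exact_mod_cast hA.card_pos) (by exact_mod_cast hB.card_pos)]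
  linarith

section Neighborhood

variable {ι K : Type*} [Fintype ι] [Field K] [LinearOrder K]

/-- The Hegselmann–Krause neighborhood `N_i` of agent `i`, with confidence bound `r`. -/
def neighborhood (r : K) (y : ι → K) (i : ι) : Finset ι :=
  univ.filter fun k => |y i - y k| ≤ r

theorem mem_neighborhood {r : K} {y : ι → K} {i k : ι} :
    k ∈ neighborhood r y i ↔ |y i - y k| ≤ r := by
  simp [neighborhood]

theorem self_mem_neighborhood [IsStrictOrderedRing K] {r : K} (hr : 0 ≤ r) (y : ι → K) (i : ι) :
    i ∈ neighborhood r y i := by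
  simpa [mem_neighborhood] using hr

theorem lt_of_mem_neighborhood_of_not_mem [IsStrictOrderedRing K] {r : K} {y : ι → K}
    {i j a b : ι} (hij : y i ≤ y j)
    (ha : a ∈ neighborhood r y i) (hb : b ∈ neighborhood r y j)
    (hab : a ∉ neighborhood r y j ∨ b ∉ neighborhood r y i) : y a < y b := by
  simp only [mem_neighborhood, not_le] at ha hb hab
  simp only [abs_le, lt_abs] at ha hb hab
  rcases hab with (h | h) | (h | h) <;> linarith

theorem neighborhood_eq_of_average_eq [DecidableEq ι] [IsStrictOrderedRing K] {r : K}
    (hr : 0 ≤ r) (y : ι → K) {i j : ι}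
    (h : (∑ k ∈ neighborhood r y i, y k) / #(neighborhood r y i) =
      (∑ k ∈ neighborhood r y j, y k) / #(neighborhood r y j)) :
    neighborhood r y i = neighborhood r y j := by
  wlog hij : y i ≤ y j generalizing i j
  · exact (this h.symm (le_of_not_ge hij)).symm
  by_contra hne
  exact h.not_lt <| sum_div_card_lt_sum_div_card y ⟨i, self_mem_neighborhood hr y i⟩
    ⟨j, self_mem_neighborhood hr y j⟩ hne
    fun _ ha _ hb => lt_of_mem_neighborhood_of_not_mem hij ha hb

end Neighborhood

theorem hk_coincidence_iff_equal_neighborhoods_general {n : ℕ} (x : Fin n → ℕ → ℝ)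
    (hupd : ∀ i t, x i (t + 1) =
      (∑ j ∈ univ.filter (fun j => |x i t - x j t| ≤ 1), x j t) /
        (univ.filter (fun j => |x i t - x j t| ≤ 1)).card)
    (i j : Fin n) (t : ℕ) :
    x i (t + 1) = x j (t + 1) ↔
      univ.filter (fun k => |x i t - x k t| ≤ 1) =
        univ.filter (fun k => |x j t - x k t| ≤ 1) := by
  rw [hupd i t, hupd j t]
  exact ⟨neighborhood_eq_of_average_eq zero_le_one (fun k => x k t), fun h => by rw [h]⟩

/-- Equal updated opinions iff equal neighborhoods, in the ordered 1-D HK dynamics. -/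
theorem hk_coincidence_iff_equal_neighborhoods {n : ℕ} (x : Fin n → ℕ → ℝ)
    (hupd : ∀ i t, x i (t + 1) =
      (∑ j ∈ univ.filter (fun j => |x i t - x j t| ≤ 1), x j t) /
        (univ.filter (fun j => |x i t - x j t| ≤ 1)).card)
    (hord : ∀ i j : Fin n, i ≤ j → x i 0 ≤ x j 0)
    (i j : Fin n) (t : ℕ) :
    x i (t + 1) = x j (t + 1) ↔
      univ.filter (fun k => |x i t - x k t| ≤ 1) =
        univ.filter (fun k => |x j t - x k t| ≤ 1) :=
  hk_coincidence_iff_equal_neighborhoods_general x hupd i j t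
end

section
/- In the one-dimensional Hegselmann–Krause dynamics with equidistant starting opinions x_i(0) = i − 1 for i = 1, …, n, it holds that x_i(t) = i − 1 for all indices i with t + 1 ≤ i ≤ n − t; in particular for n ≥ 2 the system has not converged before time (n−2)/2. -/
/-!
By induction on `t`: agents at index distance at least `t` from both ends of the chain have not
moved, while the moved agents on the left have opinions below `t` and those on the right above
`n - 1 - t`. An unmoved agent `i` one step further inside therefore sees exactly `i - 1`, `i`,
`i + 1`, whose average is `i`. An agent with opinion at most `c` averages opinions at most `c + 1`,
its own strictly smaller, so the left front advances by one agent per step, and symmetrically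
the right one. At time `t` the unmoved agents `t` and `t + 1` are at distance exactly `1`, so the
system has not converged.
-/

open Finset

namespace HegselmannKrause

variable {ι : Type*} [Fintype ι] (y : ι → ℝ)

noncomputable def neighbors (i : ι) : Finset ι := univ.filter fun j => |y i - y j| ≤ 1

noncomputable def step (i : ι) : ℝ := (∑ j ∈ neighbors y i, y j) / #(neighbors y i)

def Converged : Prop := ∀ i j, y i = y j ∨ 1 < |y i - y j|

variable {y}

theorem mem_neighbors {i j : ι} : j ∈ neighbors y i ↔ |y i - y j| ≤ 1 := by
  simp [neighbors]

theorem self_mem_neighbors (i : ι) : i ∈ neighbors y i := by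
  simp [mem_neighbors]

theorem neighbors_neg (i : ι) : neighbors (-y) i = neighbors y i := by
  ext j
  simp only [mem_neighbors, Pi.neg_apply, ← abs_neg (y i - y j), neg_sub, sub_neg_eq_add,
    neg_add_eq_sub]

theorem step_neg (i : ι) : step (-y) i = -step y i := by
  simp only [step, neighbors_neg, Pi.neg_apply, sum_neg_distrib, neg_div]

theorem step_lt_add_one {i : ι} {c : ℝ} (hi : y i ≤ c) : step y i < c + 1 := by
  have hpos : (0 : ℝ) < #(neighbors y i) := by
    exact_mod_cast card_pos.2 ⟨i, self_mem_neighbors i⟩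
  have hsum : ∑ j ∈ neighbors y i, y j < ∑ _j ∈ neighbors y i, (c + 1) := by
    refine sum_lt_sum (fun j hj => ?_) ⟨i, self_mem_neighbors i, by linarith⟩
    linarith [(abs_le.1 (mem_neighbors.1 hj)).1]
  rw [sum_const, nsmul_eq_mul] at hsum
  rwa [step, div_lt_iff₀ hpos, mul_comm]

theorem sub_one_lt_step {i : ι} {c : ℝ} (hi : c ≤ y i) : c - 1 < step y i := by
  have := step_lt_add_one (y := -y) (c := -c) (by simpa using hi)
  rw [step_neg] at this
  linarith

theorem step_eq_self_of_neighbors_eq [DecidableEq ι] {a b c : ι} (h : neighbors y b = {a, b, c})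
    (ha : y a = y b - 1) (hc : y c = y b + 1) : step y b = y b := by
  have hab : a ≠ b := fun he => by rw [he] at ha; linarith
  have hac : a ≠ c := fun he => by rw [he] at ha; linarith
  have hbc : b ≠ c := fun he => by rw [he] at hc; linarith
  rw [step, h, sum_insert (by simp [hab, hac]), sum_insert (by simp [hbc]), sum_singleton,
    card_insert_of_notMem (by simp [hab, hac]), card_insert_of_notMem (by simp [hbc]),
    card_singleton, ha, hc]
  push_cast
  ring

structure EquidistantFront (n t : ℕ) (y : Fin n → ℝ) : Prop where
  middle : ∀ j : Fin n, t ≤ j → (j : ℕ) + t + 1 ≤ n → y j = j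
  left : ∀ j : Fin n, (j : ℕ) < t → (j : ℕ) + t + 1 ≤ n → y j < t
  right : ∀ j : Fin n, t ≤ j → n < (j : ℕ) + t + 1 → (n : ℝ) - 1 - t < y j

namespace EquidistantFront

variable {n t : ℕ} {y : Fin n → ℝ}

theorem zero : EquidistantFront n 0 fun i => (i : ℝ) where
  middle _ _ _ := rfl
  left _ h := absurd h (Nat.not_lt_zero _)
  right j _ h := absurd h (by omega)

theorem mem_neighbors_iff (h : EquidistantFront n t y) {i j : Fin n} (hti : t < i)
    (hin : (i : ℕ) + t + 2 ≤ n) : j ∈ neighbors y i ↔ (i : ℕ) ≤ j + 1 ∧ (j : ℕ) ≤ i + 1 := by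
  have hti' : (t : ℝ) + 1 ≤ i := by exact_mod_cast hti
  have hin' : (i : ℝ) + t + 2 ≤ n := by exact_mod_cast hin
  rw [mem_neighbors, h.middle i hti.le (by omega), abs_le]
  rcases lt_or_ge (j : ℕ) t with hjt | hjt
  · have := h.left j hjt (by omega)
    constructor
    · rintro ⟨-, _⟩; linarith
    · omega
  rcases le_or_gt ((j : ℕ) + t + 1) n with hjn | hjn
  · rw [h.middle j hjt hjn, ← Nat.cast_le (α := ℝ), ← Nat.cast_le (α := ℝ)]
    push_cast
    constructor <;> rintro ⟨_, _⟩ <;> constructor <;> linarith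
  · have := h.right j hjt hjn
    constructor
    · rintro ⟨_, -⟩; linarith
    · omega

theorem step_eq (h : EquidistantFront n t y) {i : Fin n} (hti : t < i)
    (hin : (i : ℕ) + t + 2 ≤ n) : step y i = i := by
  let a : Fin n := ⟨i - 1, by omega⟩
  let c : Fin n := ⟨i + 1, by omega⟩
  have hyi := h.middle i hti.le (by omega)
  have hnbrs : neighbors y i = {a, i, c} := by
    ext j
    simp only [h.mem_neighbors_iff hti hin, mem_insert, mem_singleton, Fin.ext_iff, a, c]
    omega
  rw [step_eq_self_of_neighbors_eq hnbrs, hyi]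
  · rw [h.middle a (by simp only [a]; omega) (by simp only [a]; omega), hyi,
      Nat.cast_sub (by omega : 1 ≤ (i : ℕ)), Nat.cast_one]
  · rw [h.middle c (by simp only [c]; omega) (by simp only [c]; omega), hyi, Nat.cast_succ]

theorem succ (h : EquidistantFront n t y) : EquidistantFront n (t + 1) (step y) where
  middle _ hti hin := h.step_eq hti (by omega)
  left j hjt hjn := by
    have hyj : y j ≤ t := by
      rcases Nat.lt_succ_iff_lt_or_eq.1 hjt with hjt | hjt
      · exact (h.left j hjt (by omega)).le
      · rw [h.middle j hjt.ge (by omega), hjt]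
    push_cast
    exact step_lt_add_one hyj
  right j hjt hjn := by
    have hyj : (n : ℝ) - 1 - t ≤ y j := by
      rcases le_or_gt ((j : ℕ) + t + 1) n with hjn' | hjn'
      · have hn : (n : ℝ) = j + t + 1 := by exact_mod_cast (show n = (j : ℕ) + t + 1 by omega)
        rw [h.middle j (by omega) hjn', hn]
        linarith
      · exact (h.right j (by omega) hjn').le
    push_cast
    linarith [sub_one_lt_step hyj]

theorem not_converged (h : EquidistantFront n t y) (ht : 2 * t + 2 < n) : ¬ Converged y := by
  have h₀ := h.middle ⟨t, by omega⟩ le_rfl (by simp only; omega)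
  have h₁ := h.middle ⟨t + 1, by omega⟩ (by simp only; omega) (by simp only; omega)
  push_cast at h₀ h₁
  rintro hconv
  rcases hconv ⟨t, by omega⟩ ⟨t + 1, by omega⟩ with h | h
  · linarith
  · rw [h₀, h₁, show (t : ℝ) - (t + 1) = -1 by ring] at h
    norm_num at h

end EquidistantFront

end HegselmannKrause

open HegselmannKrause

/-- In the equidistant configuration x_i(0) = i (0-indexed), the middle agents
remain at their initial positions: x_i(t) = i whenever t ≤ i and i + t + 1 ≤ n.
In particular, for 2 * t < n - 2 the system has not converged at time t. -/
theorem hk_equidistant_middle_fixed {n : ℕ} (x : Fin n → ℕ → ℝ)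
    (hupd : ∀ i t, x i (t + 1) =
      (∑ j ∈ univ.filter (fun j => |x i t - x j t| ≤ 1), x j t) /
        (univ.filter (fun j => |x i t - x j t| ≤ 1)).card)
    (hinit : ∀ i : Fin n, x i 0 = (i : ℝ)) :
    (∀ t : ℕ, ∀ i : Fin n, t ≤ (i : ℕ) → (i : ℕ) + t + 1 ≤ n → x i t = (i : ℝ)) ∧
      (∀ t : ℕ, 2 * t + 2 < n →
        ¬ (∀ i j : Fin n, x i t = x j t ∨ 1 < |x i t - x j t|)) := by
  have front : ∀ t, EquidistantFront n t fun i => x i t := by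
    intro t
    induction t with
    | zero => rw [funext hinit]; exact .zero
    | succ t ih =>
      rw [show (fun i => x i (t + 1)) = step fun i => x i t from funext fun i => hupd i t]
      exact ih.succ
  exact ⟨fun t => (front t).middle, fun t ht => (front t).not_converged ht⟩
end

section
/- Let k ≥ 1 and a, b, c be nonnegative integers with b ≥ 1, and let p ∈ ℝ. Suppose an agent g has opinion x_g ∈ [p − 1, p], and its updated opinion satisfies x_g' ≥ (a₁·(p − 1 − δ) + b₁·(p − δ) + 3(a+b+c)·p)/(a₁ + b₁ + 3(a+b+c)) for some 0 ≤ a₁ ≤ a, 0 ≤ b₁ ≤ b with a₁ + b₁ ≥ 1, where δ = p − x_g ∈ [0,1]. Then x_g' ≥ p − 1/2. -/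
/-- Key estimate of Theorem 3.8: placing 3(a+b+c) strategic agents at p keeps an
influenced agent within 1/2 of p from below. -/
theorem hk_nine_n_estimate (k : ℕ) (hk : 1 ≤ k) (a b c a₁ b₁ : ℕ) (hb : 1 ≤ b)
    (ha₁ : a₁ ≤ a) (hb₁ : b₁ ≤ b) (hab₁ : 1 ≤ a₁ + b₁)
    (p xg xg' δ : ℝ) (hxg1 : p - 1 ≤ xg) (hxg2 : xg ≤ p)
    (hδ : δ = p - xg) (hδ0 : 0 ≤ δ) (hδ1 : δ ≤ 1)
    (hupd : xg' ≥ ((a₁ : ℝ) * (p - 1 - δ) + (b₁ : ℝ) * (p - δ) +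
        3 * ((a : ℝ) + b + c) * p) / ((a₁ : ℝ) + b₁ + 3 * ((a : ℝ) + b + c))) :
    xg' ≥ p - 1 / 2 := by
  have ha₁' : (a₁ : ℝ) ≤ a := by exact_mod_cast ha₁
  have hb₁' : (b₁ : ℝ) ≤ b := by exact_mod_cast hb₁
  have hab₁' : (1 : ℝ) ≤ (a₁ : ℝ) + b₁ := by exact_mod_cast hab₁
  have hc : (0 : ℝ) ≤ c := Nat.cast_nonneg c
  have ha₁0 : (0 : ℝ) ≤ a₁ := Nat.cast_nonneg a₁
  have hb₁0 : (0 : ℝ) ≤ b₁ := Nat.cast_nonneg b₁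
  have hD : (0 : ℝ) < (a₁ : ℝ) + b₁ + 3 * ((a : ℝ) + b + c) := by nlinarith
  rw [ge_iff_le, div_le_iff₀ hD] at hupd
  nlinarith [mul_nonneg ha₁0 hδ0, mul_nonneg hb₁0 hδ0]
end
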